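/- Every bounded graph matroid family M has the Lovász-Yemini property; specifically, every (2·r(M) − 1)-connected graph is M-rigid. -/

import Mathlib

/-!
Common framework: graph matroid families.

A finite simple graph (without isolated vertices) is identified with its edge
set: a finite set of non-diagonal elements of `Sym2 ℕ`.  A graph matroid
family is encoded, following the paper, as a finitary matroid on the edge set
of the countable complete graph on `ℕ` that is invariant under all
permutations of `ℕ`.
-/

/-- The set of vertices covered by a set of edges. -/
def eSupp (E : Set (Sym2 ℕ)) : Set ℕ := {v : ℕ | ∃ e ∈ E, v ∈ e}

/-- The edge set of the complete graph on the vertex set `V`. -/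
def clique (V : Set ℕ) : Set (Sym2 ℕ) := {e : Sym2 ℕ | ¬ e.IsDiag ∧ ∀ v ∈ e, v ∈ V}

/-- The edge set of the complete graph `K_n` on the vertices `0, …, n-1`. -/
def cliqueN (n : ℕ) : Set (Sym2 ℕ) := clique {v : ℕ | v < n}

/-- `E` is (the edge set of) a finite simple graph. -/
def IsGraph (E : Set (Sym2 ℕ)) : Prop := E.Finite ∧ ∀ e ∈ E, ¬ e.IsDiag

/-- The degree of the vertex `v` in the edge set `E`. -/
noncomputable def deg (E : Set (Sym2 ℕ)) (v : ℕ) : ℕ := {e ∈ E | v ∈ e}.ncard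

/-- The minimum degree of (the graph with) edge set `E` (whose vertex set is `eSupp E`). -/
noncomputable def minDeg (E : Set (Sym2 ℕ)) : ℕ := sInf {k : ℕ | ∃ v ∈ eSupp E, deg E v = k}

/-- Deleting a set `S` of vertices from the graph with edge set `E`. -/
def deleteVerts (E : Set (Sym2 ℕ)) (S : Set ℕ) : Set (Sym2 ℕ) := {e ∈ E | ∀ v ∈ e, v ∉ S}

/-- The graph with edge set `E` is `k`-connected: it has more than `k` vertices and
deleting any set of fewer than `k` vertices leaves a connected graph. -/
def KConnected (k : ℕ) (E : Set (Sym2 ℕ)) : Prop :=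
  k < (eSupp E).ncard ∧
  ∀ S : Finset ℕ, S.card < k →
    ((SimpleGraph.fromEdgeSet E).induce (eSupp E \ ↑S)).Connected

/-- `E` is a forest. -/
def IsForest (E : Set (Sym2 ℕ)) : Prop := (SimpleGraph.fromEdgeSet E).IsAcyclic

/-- `E` is a matching: no two distinct edges of `E` share a vertex. -/
def IsMatching (E : Set (Sym2 ℕ)) : Prop :=
  ∀ e ∈ E, ∀ f ∈ E, e ≠ f → ∀ v : ℕ, v ∈ e → v ∉ f

/-- `E` is a star `K_{1,m}` with `m` edges. -/
def IsStar (m : ℕ) (E : Set (Sym2 ℕ)) : Prop :=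
  ∃ (c : ℕ) (L : Finset ℕ), c ∉ L ∧ L.card = m ∧ E = (fun x => s(c, x)) '' ↑L

/-- `C` is a cycle graph `C_n` for some `n ≥ 3`. -/
def IsCycleGraph (C : Set (Sym2 ℕ)) : Prop :=
  ∃ n : ℕ, 3 ≤ n ∧ ∃ f : ZMod n → ℕ, Function.Injective f ∧
    C = {e : Sym2 ℕ | ∃ i : ZMod n, e = s(f i, f (i + 1))}

/-- The rank of the set `X` in the matroid `M₀`: the supremum of the cardinalities of
independent subsets of `X` (as a natural number; all sets we use are finite). -/
noncomputable def mrk (M₀ : Matroid (Sym2 ℕ)) (X : Set (Sym2 ℕ)) : ℕ :=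
  sSup {n : ℕ | ∃ I ⊆ X, M₀.Indep I ∧ I.ncard = n}

/-- A vertical `k`-separation of the matroid `M₀`. -/
def VerticalSep (M₀ : Matroid (Sym2 ℕ)) (k : ℕ) (E₁ E₂ : Set (Sym2 ℕ)) : Prop :=
  Disjoint E₁ E₂ ∧ E₁ ∪ E₂ = M₀.E ∧
  k ≤ mrk M₀ E₁ ∧ k ≤ mrk M₀ E₂ ∧
  mrk M₀ E₁ + mrk M₀ E₂ + 1 ≤ mrk M₀ M₀.E + k

/-- The matroid `M₀` is vertically `k`-connected. -/
def VerticallyConnected (M₀ : Matroid (Sym2 ℕ)) (k : ℕ) : Prop :=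
  k ≤ mrk M₀ M₀.E ∧
  ∀ k' : ℕ, 0 < k' → k' < k → ∀ E₁ E₂ : Set (Sym2 ℕ), ¬ VerticalSep M₀ k' E₁ E₂

/-- A `d`-dimensional abstract rigidity matroid on the complete graph with vertex set `V`. -/
def IsARM (d : ℕ) (V : Set ℕ) (M₀ : Matroid (Sym2 ℕ)) : Prop :=
  M₀.E = clique V ∧
  (∀ E₁ E₂ : Set (Sym2 ℕ), E₁ ⊆ clique V → E₂ ⊆ clique V →
      (eSupp E₁ ∩ eSupp E₂).ncard < d →
      M₀.closure (E₁ ∪ E₂) = M₀.closure E₁ ∪ M₀.closure E₂) ∧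
  (∀ E₁ E₂ : Set (Sym2 ℕ), E₁ ⊆ clique V → E₂ ⊆ clique V →
      d ≤ (eSupp E₁ ∩ eSupp E₂).ncard →
      M₀.closure E₁ = clique (eSupp E₁) → M₀.closure E₂ = clique (eSupp E₂) →
      M₀.closure (E₁ ∪ E₂) = clique (eSupp E₁ ∪ eSupp E₂))

/-- The `d`-dimensional edge split operation: replace an edge `uv` of `G` by a new
vertex `w` joined to `u` and `v`, as well as to `d - 1` other vertices of `G`. -/
def EdgeSplit (d : ℕ) (G G' : Set (Sym2 ℕ)) : Prop :=
  ∃ (u v w : ℕ) (X : Finset ℕ),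
    s(u, v) ∈ G ∧ w ∉ eSupp G ∧ ↑X ⊆ eSupp G ∧ X.card = d - 1 ∧ u ∉ X ∧ v ∉ X ∧
    G' = (G \ {s(u, v)}) ∪ {s(w, u), s(w, v)} ∪ ((fun x => s(w, x)) '' ↑X)

/-- A graph matroid family: a finitary matroid on the edge set of the countable
complete graph on `ℕ`, invariant under all permutations of `ℕ`. -/
structure GraphMatroidFamily where
  /-- The underlying matroid on the edge set of `K_ℕ`. -/
  M : Matroid (Sym2 ℕ)
  ground_eq : M.E = {e : Sym2 ℕ | ¬ e.IsDiag}
  finitary : M.Finitary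
  invariant : ∀ σ : Equiv.Perm ℕ, ∀ I : Set (Sym2 ℕ),
    M.Indep I → M.Indep (Sym2.map σ '' I)

namespace GraphMatroidFamily

variable (M : GraphMatroidFamily)

/-- The rank function of the family: `M.rk E` is the rank of the matroid `M(G)` for
any graph `G` whose edge set contains `E`. -/
noncomputable def rk (E : Set (Sym2 ℕ)) : ℕ := mrk M.M E

/-- A set of edges (a graph) is `M`-independent. -/
def Indep (E : Set (Sym2 ℕ)) : Prop := M.M.Indep E

/-- `C` is an `M`-circuit: a graph that is not `M`-independent, but such that deleting
any single edge from it yields an `M`-independent graph. -/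
def IsCircuit (C : Set (Sym2 ℕ)) : Prop :=
  IsGraph C ∧ ¬ M.Indep C ∧ ∀ e ∈ C, M.Indep (C \ {e})

/-- The graph with edge set `E` is `M`-rigid. -/
def Rigid (E : Set (Sym2 ℕ)) : Prop := M.rk E = M.rk (clique (eSupp E))

/-- The graph with vertex set `V` and edge set `E` is `M`-rigid. -/
def RigidOn (V : Set ℕ) (E : Set (Sym2 ℕ)) : Prop := M.rk E = M.rk (clique V)

/-- `M` is trivial if every (finite, simple) graph is `M`-independent. -/
def Trivial : Prop := ∀ E : Set (Sym2 ℕ), IsGraph E → M.Indep E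

/-- `M` is unbounded: the sequence `r(K_n)` is unbounded. -/
def Unbounded : Prop := ∀ B : ℕ, ∃ n : ℕ, B < M.rk (cliqueN n)

/-- `M` is bounded: the sequence `r(K_n)` is bounded. -/
def Bounded : Prop := ∃ B : ℕ, ∀ n : ℕ, M.rk (cliqueN n) ≤ B

/-- For a bounded family, `m` is the rank `r(M)` of `M`: the maximum (limit) of the
monotone sequence `r(K_n)`. -/
def HasRank (m : ℕ) : Prop :=
  (∀ n : ℕ, M.rk (cliqueN n) ≤ m) ∧ ∃ n : ℕ, M.rk (cliqueN n) = m

/-- `d` is the dimensionality of (the nontrivial family) `M`: the least `d` such that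
there is an `M`-circuit with minimum degree `d + 1`. -/
def IsDimensionality (d : ℕ) : Prop :=
  IsLeast {d : ℕ | ∃ C, M.IsCircuit C ∧ minDeg C = d + 1} d

/-- `t` is the threshold of (the nontrivial family) `M` with dimensionality `d`:
the least value of `|V(C)| - 1` over all `M`-circuits `C` with minimum degree `d + 1`. -/
def IsThreshold (d t : ℕ) : Prop :=
  IsLeast {t : ℕ | ∃ C, M.IsCircuit C ∧ minDeg C = d + 1 ∧ (eSupp C).ncard = t + 1} t

/-- `M` has the Lovász–Yemini property. -/
def LovaszYemini : Prop :=
  ∃ c : ℕ, ∀ E : Set (Sym2 ℕ), IsGraph E → KConnected c E → M.Rigid E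

/-- `ψ` is an isomorphism between the matroids `M(G)` and `M(H)`. -/
def MatroidIso (G H : Set (Sym2 ℕ)) (ψ : Sym2 ℕ → Sym2 ℕ) : Prop :=
  Set.BijOn ψ G H ∧ ∀ S ⊆ G, (M.Indep S ↔ M.Indep (ψ '' S))

/-- `G` is `M`-reconstructible: every isomorphism between `M(G)` and `M(H)` (for a graph
`H` without isolated vertices) is induced by a graph isomorphism. -/
def Reconstructible (G : Set (Sym2 ℕ)) : Prop :=
  ∀ H : Set (Sym2 ℕ), IsGraph H → ∀ ψ : Sym2 ℕ → Sym2 ℕ, M.MatroidIso G H ψ →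
    ∃ φ : ℕ → ℕ, Set.BijOn φ (eSupp G) (eSupp H) ∧ ∀ e ∈ G, ψ e = Sym2.map φ e

/-- `M` has the Whitney property. -/
def Whitney : Prop :=
  ∃ c : ℕ, ∀ E : Set (Sym2 ℕ), IsGraph E → KConnected c E → M.Reconstructible E

/-- `M` is the union of the graph matroid families `Ms`. -/
def IsUnionOf {k : ℕ} (Ms : Fin k → GraphMatroidFamily) : Prop :=
  ∀ I : Set (Sym2 ℕ),
    M.Indep I ↔ ∃ Is : Fin k → Set (Sym2 ℕ), (∀ i, (Ms i).Indep (Is i)) ∧ I = ⋃ i, Is i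

/-- `M` is a family of `d`-dimensional abstract rigidity matroids. -/
def FamilyOfARM (d : ℕ) : Prop :=
  ∀ n : ℕ, d ≤ n → IsARM d {v : ℕ | v < n} (M.M.restrict (cliqueN n))

/-- `M` is `1`-extendable: its dimensionality `d` is finite and positive, and the
`d`-dimensional edge split operation preserves `M`-independence. -/
def OneExtendable : Prop :=
  ∃ d : ℕ, 0 < d ∧ M.IsDimensionality d ∧
    ∀ G G' : Set (Sym2 ℕ), IsGraph G → M.Indep G → EdgeSplit d G G' → M.Indep G'

/-- `G` is `k`-vertex-redundantly `M`-rigid. -/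
def VertexRedundantlyRigid (k : ℕ) (G : Set (Sym2 ℕ)) : Prop :=
  M.Rigid G ∧ ∀ S : Finset ℕ, ↑S ⊆ eSupp G → S.card ≤ k →
    M.RigidOn (eSupp G \ ↑S) (deleteVerts G ↑S)

end GraphMatroidFamily

/-!
Let `B` be a maximal `M`-independent subset of `G`. If `|B| < r(M)`, then `B` covers at most
`2 r(M) - 2` vertices, so by `(2 r(M) - 1)`-connectivity `G` has an edge `wu` avoiding them, and
`B + wu` is dependent by maximality. On the other hand, an independent set of `r(M)` edges of some
`K_n`, moved by a permutation of `ℕ` away from the vertices of `B + wu`, augments `B` by an edge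
`ab` disjoint from `V(B) ∪ {w, u}`; a permutation fixing `V(B)` and sending `ab` to `wu` then
makes `B + wu` independent. Hence `r(G) ≥ r(M) ≥ r(K_{V(G)})`.
-/

open Set

theorem Set.Finite.exists_perm_mapsTo_compl {α : Type*} [Infinite α] {s t : Set α}
    (hs : s.Finite) (ht : t.Finite) : ∃ σ : Equiv.Perm α, MapsTo σ s tᶜ := by
  classical
  induction s, hs using Set.Finite.induction_on with
  | empty => exact ⟨1, mapsTo_empty _ _⟩
  | @insert a s ha hs ih =>
    obtain ⟨σ, hσ⟩ := ih
    obtain ⟨b, hb⟩ := (ht.union (hs.image σ)).infinite_compl.nonempty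
    simp only [mem_compl_iff, mem_union, not_or] at hb
    refine ⟨σ.trans (Equiv.swap (σ a) b), ?_⟩
    rintro x (rfl | hx)
    · simpa using hb.1
    · have hxa : σ x ≠ σ a := σ.injective.ne (ne_of_mem_of_not_mem hx ha)
      have hxb : σ x ≠ b := fun h => hb.2 ⟨x, hx, h⟩
      simpa [Equiv.swap_apply_of_ne_of_ne hxa hxb] using hσ hx

lemma mem_clique_iff {V : Set ℕ} {a b : ℕ} : s(a, b) ∈ clique V ↔ a ≠ b ∧ a ∈ V ∧ b ∈ V := by
  simp [clique, Sym2.mk_isDiag_iff]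

lemma clique_mono {V W : Set ℕ} (h : V ⊆ W) : clique V ⊆ clique W :=
  fun _ he => ⟨he.1, fun v hv => h (he.2 v hv)⟩

lemma clique_finite {V : Set ℕ} (hV : V.Finite) : (clique V).Finite := by
  refine ((hV.prod hV).image Sym2.mk.uncurry).subset fun e he => ?_
  rw [← sym2_eq_mk_image, mem_sym2_iff_subset]
  exact he.2

lemma subset_clique_eSupp {G : Set (Sym2 ℕ)} (hG : IsGraph G) : G ⊆ clique (eSupp G) :=
  fun e he => ⟨hG.2 e he, fun _ hv => ⟨e, he, hv⟩⟩

lemma eSupp_eq_biUnion (E : Set (Sym2 ℕ)) : eSupp E = ⋃ e ∈ E, (e : Set ℕ) := by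
  ext v; simp [eSupp]

lemma eSupp_finite {E : Set (Sym2 ℕ)} (hE : E.Finite) : (eSupp E).Finite := by
  rw [eSupp_eq_biUnion]
  refine hE.biUnion fun e _ => ?_
  induction e using Sym2.ind with
  | _ a b => simp

lemma ncard_eSupp_le {E : Set (Sym2 ℕ)} (hE : E.Finite) : (eSupp E).ncard ≤ 2 * E.ncard := by
  have h := hE.toFinset.set_ncard_biUnion_le (fun e : Sym2 ℕ => (e : Set ℕ))
  simp only [Finite.mem_toFinset] at h
  rw [eSupp_eq_biUnion]
  refine h.trans ?_
  rw [ncard_eq_toFinset_card E hE, mul_comm, ← smul_eq_mul]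
  refine Finset.sum_le_card_nsmul _ _ _ fun e _ => ?_
  induction e using Sym2.ind with
  | _ a b => simpa using ncard_insert_le a {b}

theorem KConnected.exists_edge_avoiding {k : ℕ} {G : Set (Sym2 ℕ)} (hG : KConnected k G)
    {S : Set ℕ} (hS : S.Finite) (hcard : S.ncard < k) :
    ∃ w u, s(w, u) ∈ G ∧ w ≠ u ∧ w ∉ S ∧ u ∉ S := by
  have hconn := hG.2 hS.toFinset (by rwa [← ncard_eq_toFinset_card S hS])
  rw [hS.coe_toFinset] at hconn
  have htwo : 1 < (eSupp G \ S).ncard := by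
    have := le_ncard_sdiff S (eSupp G) hS
    have := hG.1
    omega
  have : Nontrivial ↥(eSupp G \ S) :=
    nontrivial_coe_sort.2 (one_lt_ncard_iff_nontrivial_and_finite.1 htwo).1
  obtain ⟨v⟩ := hconn.nonempty
  obtain ⟨u, hvu⟩ := hconn.preconnected.exists_adj_of_nontrivial v
  rw [SimpleGraph.comap_adj, SimpleGraph.fromEdgeSet_adj] at hvu
  exact ⟨v, u, hvu.1, hvu.2, v.2.2, u.2.2⟩

section mrk

variable (M₀ : Matroid (Sym2 ℕ)) {X Y I : Set (Sym2 ℕ)}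

lemma bddAbove_ncard_indep_subset (hX : X.Finite) :
    BddAbove {n : ℕ | ∃ I ⊆ X, M₀.Indep I ∧ I.ncard = n} :=
  bddAbove_def.2 ⟨X.ncard, by rintro _ ⟨I, hIX, -, rfl⟩; exact ncard_le_ncard hIX hX⟩

lemma exists_indep_ncard_eq_mrk (hX : X.Finite) : ∃ I ⊆ X, M₀.Indep I ∧ I.ncard = mrk M₀ X :=
  Nat.sSup_mem (s := {n : ℕ | ∃ I ⊆ X, M₀.Indep I ∧ I.ncard = n})
    ⟨0, ∅, empty_subset X, M₀.empty_indep, ncard_empty _⟩ (bddAbove_ncard_indep_subset M₀ hX)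

variable {M₀}

lemma Matroid.Indep.ncard_le_mrk (hI : M₀.Indep I) (hX : X.Finite) (hIX : I ⊆ X) :
    I.ncard ≤ mrk M₀ X :=
  le_csSup (bddAbove_ncard_indep_subset M₀ hX) ⟨I, hIX, hI, rfl⟩

lemma mrk_mono (hY : Y.Finite) (hXY : X ⊆ Y) : mrk M₀ X ≤ mrk M₀ Y := by
  obtain ⟨I, hIX, hI, hIcard⟩ := exists_indep_ncard_eq_mrk M₀ (hY.subset hXY)
  exact hIcard ▸ hI.ncard_le_mrk hY (hIX.trans hXY)

end mrk

namespace GraphMatroidFamily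

variable {M : GraphMatroidFamily} {m : ℕ}

lemma indep_insert_map_of_eqOn (σ : Equiv.Perm ℕ) {B : Set (Sym2 ℕ)} {e : Sym2 ℕ}
    (hσ : EqOn σ id (eSupp B)) (h : M.M.Indep (insert e B)) :
    M.M.Indep (insert (Sym2.map σ e) B) := by
  have hB : Sym2.map σ '' B = B := by
    refine (image_congr fun f hf => ?_).trans (image_id' B)
    exact (Sym2.map_congr fun v hv => hσ ⟨f, hf, hv⟩).trans (congrFun Sym2.map_id f)
  simpa [image_insert_eq, hB] using M.invariant σ _ h

lemma indep_insert_of_indep_insert {B : Set (Sym2 ℕ)} {a b w u : ℕ}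
    (h : M.M.Indep (insert s(a, b) B)) (hab : a ≠ b) (hwu : w ≠ u) (hwb : w ≠ b)
    (hB : Disjoint (eSupp B) {a, b, w, u}) : M.M.Indep (insert s(w, u) B) := by
  have hσ : EqOn ((Equiv.swap a w).trans (Equiv.swap b u)) id (eSupp B) := by
    intro v hv
    simp only [disjoint_left, mem_insert_iff, mem_singleton_iff, not_or] at hB
    obtain ⟨hva, hvb, hvw, hvu⟩ := hB hv
    simp [Equiv.swap_apply_of_ne_of_ne, hva, hvb, hvw, hvu]
  convert indep_insert_map_of_eqOn _ hσ h using 2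
  simp [Equiv.swap_apply_of_ne_of_ne, hwu, hwb, hab.symm, hwb.symm]

namespace HasRank

lemma rk_clique_le (hm : M.HasRank m) {V : Set ℕ} (hV : V.Finite) : M.rk (clique V) ≤ m := by
  obtain ⟨N, hN⟩ := hV.bddAbove
  exact (mrk_mono (clique_finite (finite_Iio (N + 1)))
    (clique_mono fun v hv => Nat.lt_succ_of_le (hN hv))).trans (hm.1 (N + 1))

lemma exists_indep_subset_clique_compl (hm : M.HasRank m) {F : Set ℕ} (hF : F.Finite) :
    ∃ J ⊆ clique Fᶜ, M.M.Indep J ∧ J.Finite ∧ J.ncard = m := by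
  obtain ⟨n, hn⟩ := hm.2
  obtain ⟨J, hJn, hJ, hJcard⟩ := exists_indep_ncard_eq_mrk M.M (clique_finite (finite_Iio n))
  have hJfin : J.Finite := (clique_finite (finite_Iio n)).subset hJn
  obtain ⟨σ, hσ⟩ := (finite_Iio n).exists_perm_mapsTo_compl hF
  refine ⟨Sym2.map σ '' J, ?_, M.invariant σ J hJ, hJfin.image _, ?_⟩
  · rintro _ ⟨e, he, rfl⟩
    induction e using Sym2.ind with
    | _ a b =>
      obtain ⟨hab, ha, hb⟩ := mem_clique_iff.1 (hJn he)
      exact mem_clique_iff.2 ⟨σ.injective.ne hab, hσ ha, hσ hb⟩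
  · rw [ncard_image_of_injective _ (Sym2.map.injective σ.injective), hJcard]
    exact hn

theorem le_rk_of_kConnected (hm : M.HasRank m) {G : Set (Sym2 ℕ)} (hG : IsGraph G)
    (hK : KConnected (2 * m - 1) G) : m ≤ M.rk G := by
  by_contra! hlt
  obtain ⟨B, hBG, hB, hBcard⟩ := exists_indep_ncard_eq_mrk M.M hG.1
  have hBfin : B.Finite := hG.1.subset hBG
  have hBV : (eSupp B).ncard < 2 * m - 1 := by
    have := ncard_eSupp_le hBfin
    unfold rk at hlt
    omega
  obtain ⟨w, u, hwuG, hwu, hw, hu⟩ := hK.exists_edge_avoiding (eSupp_finite hBfin) hBV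
  have hdep : ¬ M.M.Indep (insert s(w, u) B) := fun h => by
    have := h.ncard_le_mrk hG.1 (insert_subset hwuG hBG)
    rw [ncard_insert_of_notMem (fun he => hw ⟨_, he, Sym2.mem_mk_left w u⟩) hBfin] at this
    omega
  obtain ⟨J, hJF, hJ, hJfin, hJcard⟩ :=
    hm.exists_indep_subset_clique_compl ((eSupp_finite hBfin).union (toFinite {w, u}))
  have hBJ : B.encard < J.encard := by
    rw [← hBfin.cast_ncard_eq, ← hJfin.cast_ncard_eq, hJcard, hBcard]
    exact_mod_cast hlt
  obtain ⟨e, ⟨heJ, -⟩, he⟩ := hB.augment hJ hBJ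
  induction e using Sym2.ind with
  | _ a b =>
    obtain ⟨hab, ha, hb⟩ := mem_clique_iff.1 (hJF heJ)
    simp only [mem_compl_iff, mem_union, mem_insert_iff, mem_singleton_iff, not_or] at ha hb
    refine hdep (indep_insert_of_indep_insert he hab hwu (Ne.symm hb.2.1) ?_)
    simp only [disjoint_left, mem_insert_iff, mem_singleton_iff]
    rintro v hv (rfl | rfl | rfl | rfl)
    exacts [ha.1 hv, hb.1 hv, hw hv, hu hv]

end HasRank

end GraphMatroidFamily

theorem bounded_lovaszYemini_general (M : GraphMatroidFamily) (m : ℕ)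
    (hm : M.HasRank m) :
    M.LovaszYemini ∧
    ∀ G : Set (Sym2 ℕ), IsGraph G → KConnected (2 * m - 1) G → M.Rigid G := by
  have rigid (G : Set (Sym2 ℕ)) (hG : IsGraph G) (hK : KConnected (2 * m - 1) G) :
      M.Rigid G :=
    le_antisymm (mrk_mono (clique_finite (eSupp_finite hG.1)) (subset_clique_eSupp hG))
      ((hm.rk_clique_le (eSupp_finite hG.1)).trans (hm.le_rk_of_kConnected hG hK))
  exact ⟨⟨2 * m - 1, rigid⟩, rigid⟩

/-- Every bounded graph matroid family `M` has the Lovász–Yemini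
property; specifically, every `(2 r(M) - 1)`-connected graph is `M`-rigid. -/
theorem bounded_lovaszYemini (M : GraphMatroidFamily) (m : ℕ)
    (hb : M.Bounded) (hm : M.HasRank m) :
    M.LovaszYemini ∧
    ∀ G : Set (Sym2 ℕ), IsGraph G → KConnected (2 * m - 1) G → M.Rigid G :=
  bounded_lovaszYemini_general M m hm
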